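/- arXiv:2604.09800 — 2 statements merged into one kernel-verified Lean document; each statement's English description precedes it below -/
import Mathlib

section
/- Suppose γ(s) satisfies the closest-point condition (γ(s) - r(s)) · t(s) = 0 for all s, where t(s) = (cos φ(s), sin φ(s)), dφ/ds = ν_o κ_o, dγ/ds = ν_o t, and r is unit speed with tangent a satisfying a·t = sin α, (γ-r)·t' component giving (γ-r)·n = ρ with n the unit normal. Then differentiating the orthogonality condition yields ν_o = sin α / (1 + ρ κ_o), provided 1 + ρ κ_o ≠ 0. -/
/-!
Write `d = γ - r`. Differentiating `d · t = 0` gives `d' · t + d · t' = 0`, where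
`d' = ν t - a` and `t' = φ' n = ν κₒ n`. Since `t · t = 1`, `a · t = sin α` and `d · n = ρ`,
this reads `ν - sin α + ν κₒ ρ = 0`.
-/

/-- Dot product on `ℝ × ℝ`. -/
def dot2 (u v : ℝ × ℝ) : ℝ := u.1 * v.1 + u.2 * v.2

open Real

theorem dot2_sub_left (u v w : ℝ × ℝ) : dot2 (u - v) w = dot2 u w - dot2 v w := by
  simp only [dot2, Prod.fst_sub, Prod.snd_sub]
  ring

theorem dot2_smul_left (c : ℝ) (u w : ℝ × ℝ) : dot2 (c • u) w = c * dot2 u w := by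
  simp only [dot2, Prod.smul_fst, Prod.smul_snd, smul_eq_mul]
  ring

theorem dot2_smul_right (c : ℝ) (u w : ℝ × ℝ) : dot2 u (c • w) = c * dot2 u w := by
  simp only [dot2, Prod.smul_fst, Prod.smul_snd, smul_eq_mul]
  ring

theorem dot2_cos_sin_self (x : ℝ) : dot2 (cos x, sin x) (cos x, sin x) = 1 := by
  simp only [dot2]
  linear_combination cos_sq_add_sin_sq x

theorem HasDerivAt.dot2 {u v : ℝ → ℝ × ℝ} {u' v' : ℝ × ℝ} {s : ℝ}
    (hu : HasDerivAt u u' s) (hv : HasDerivAt v v' s) :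
    HasDerivAt (fun x => _root_.dot2 (u x) (v x))
      (_root_.dot2 u' (v s) + _root_.dot2 (u s) v') s := by
  have hu₁ : HasDerivAt (fun x => (u x).1) u'.1 s := hu.fst
  have hu₂ : HasDerivAt (fun x => (u x).2) u'.2 s := hu.snd
  have hv₁ : HasDerivAt (fun x => (v x).1) v'.1 s := hv.fst
  have hv₂ : HasDerivAt (fun x => (v x).2) v'.2 s := hv.snd
  refine ((hu₁.mul hv₁).add (hu₂.mul hv₂)).congr_deriv ?_
  simp only [_root_.dot2]
  ring

theorem HasDerivAt.cos_sin {φ : ℝ → ℝ} {φ' s : ℝ} (h : HasDerivAt φ φ' s) :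
    HasDerivAt (fun x => (Real.cos (φ x), Real.sin (φ x)))
      (φ' • (-Real.sin (φ s), Real.cos (φ s))) s := by
  convert h.cos.prodMk h.sin using 1
  ext <;> simp only [Prod.smul_fst, Prod.smul_snd, smul_eq_mul] <;> ring

/-- Differentiating the closest-point orthogonality condition
`(γ - r) · t = 0` yields the shadow-point speed `ν_o = sin α / (1 + ρ κ_o)`. -/
theorem shadow_point_speed (r γ : ℝ → ℝ × ℝ) (θ φ α ρ ν κo : ℝ → ℝ)
    (t n : ℝ → ℝ × ℝ)
    (ht : ∀ s, t s = (Real.cos (φ s), Real.sin (φ s)))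
    (hn : ∀ s, n s = (-Real.sin (φ s), Real.cos (φ s)))
    (hφ : ∀ s, HasDerivAt φ (ν s * κo s) s)
    (hγ : ∀ s, HasDerivAt γ (ν s • t s) s)
    (hr : ∀ s, HasDerivAt r (Real.cos (θ s), Real.sin (θ s)) s)
    (hat : ∀ s, dot2 (Real.cos (θ s), Real.sin (θ s)) (t s) = Real.sin (α s))
    (horth : ∀ s, dot2 (γ s - r s) (t s) = 0)
    (hρn : ∀ s, dot2 (γ s - r s) (n s) = ρ s)
    (hne : ∀ s, 1 + ρ s * κo s ≠ 0) :
    ∀ s, ν s = Real.sin (α s) / (1 + ρ s * κo s) := by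
  intro s
  have ht_deriv : HasDerivAt t ((ν s * κo s) • n s) s := by
    rw [funext ht, hn s]
    exact (hφ s).cos_sin
  have horth_deriv : HasDerivAt (fun x => dot2 (γ x - r x) (t x)) _ s :=
    ((hγ s).sub (hr s)).dot2 ht_deriv
  rw [funext horth] at horth_deriv
  have hderiv_zero := horth_deriv.unique (hasDerivAt_const s 0)
  rw [dot2_sub_left, dot2_smul_left, dot2_smul_right, hat, Pi.sub_apply, hρn, ht s,
    dot2_cos_sin_self] at hderiv_zero
  rw [eq_div_iff (hne s)]
  linear_combination hderiv_zero
end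

section
/- For constant object curvature κ̄ ≥ 0, along the closed-loop kinematics dρ/ds = -cos α, dα/ds = -κ + (κ̄/(1+ρκ̄)) sin α with κ = -μ₁ cos α + (ρ - μ₂) sin α, the function V(ρ,α) = -ln(sin α) + (1/2)(ρ - μ₂)² - ln(1 + ρκ̄) satisfies dV/ds = -μ₁ cos²α / sin α, which is ≤ 0 whenever 0 < α < π and μ₁ > 0. -/
/-- The Lyapunov function `V(ρ,α) = -ln(sin α) + (1/2)(ρ-μ₂)² - ln(1+ρκ̄)`. -/
noncomputable def Lyap (κ' μ₂ ρ α : ℝ) : ℝ :=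
  -Real.log (Real.sin α) + (1/2) * (ρ - μ₂)^2 - Real.log (1 + ρ * κ')

/-!
The chain rule gives `dV/ds = -(cos α / sin α) α' + (ρ - μ₂) ρ' - κ̄ ρ' / (1 + ρκ̄)`.
Substituting the closed loop, the object-curvature term `κ̄ sin α / (1 + ρκ̄)` in `α'`
cancels against the `-ln(1 + ρκ̄)` part of `V`, and the `(ρ - μ₂) sin α` feedback term cancels
against the quadratic part, leaving only the damping `-μ₁ cos² α / sin α`.
-/

open Real

theorem hasDerivAt_lyap_comp {κ' μ₂ ρ' α' s : ℝ} {ρ α : ℝ → ℝ}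
    (hρ : HasDerivAt ρ ρ' s) (hα : HasDerivAt α α' s)
    (hsin : sin (α s) ≠ 0) (hden : 1 + ρ s * κ' ≠ 0) :
    HasDerivAt (fun u => Lyap κ' μ₂ (ρ u) (α u))
      (-(cos (α s) * α' / sin (α s)) + (ρ s - μ₂) * ρ' - ρ' * κ' / (1 + ρ s * κ')) s := by
  have hlogSin := ((hasDerivAt_sin (α s)).comp s hα).log hsin
  have hsq := ((hρ.sub_const μ₂).fun_pow 2).const_mul (1 / 2 : ℝ)
  have hlogDen := ((hρ.mul_const κ').const_add 1).log hden
  refine ((hlogSin.neg.add hsq).sub hlogDen).congr_deriv ?_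
  simp only [Function.comp_apply]
  ring

theorem lyap_rate_closedLoop {κ' μ₁ μ₂ ρ α : ℝ} (hsin : sin α ≠ 0) (hden : 1 + ρ * κ' ≠ 0) :
    -(cos α * (-(-μ₁ * cos α + (ρ - μ₂) * sin α) + κ' / (1 + ρ * κ') * sin α) / sin α)
        + (ρ - μ₂) * -cos α - -cos α * κ' / (1 + ρ * κ')
      = -μ₁ * cos α ^ 2 / sin α := by
  field_simp
  ring

theorem neg_mul_sq_div_nonpos {μ c x : ℝ} (hμ : 0 ≤ μ) (hx : 0 ≤ x) : -μ * c ^ 2 / x ≤ 0 :=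
  div_nonpos_of_nonpos_of_nonneg
    (mul_nonpos_of_nonpos_of_nonneg (neg_nonpos.mpr hμ) (sq_nonneg c)) hx

theorem lyapunov_derivative_general (κ' μ₁ μ₂ : ℝ)
    (ρ α : ℝ → ℝ)
    (hρ' : ∀ s, HasDerivAt ρ (-Real.cos (α s)) s)
    (hα' : ∀ s, HasDerivAt α
      (-(-μ₁ * Real.cos (α s) + (ρ s - μ₂) * Real.sin (α s))
        + (κ' / (1 + ρ s * κ')) * Real.sin (α s)) s)
    (hαrange : ∀ s, 0 < α s ∧ α s < Real.pi)
    (hden : ∀ s, 0 < 1 + ρ s * κ') :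
    ∀ s, HasDerivAt (fun u => Lyap κ' μ₂ (ρ u) (α u))
        (-μ₁ * (Real.cos (α s))^2 / Real.sin (α s)) s ∧
      (0 < μ₁ → -μ₁ * (Real.cos (α s))^2 / Real.sin (α s) ≤ 0) := by
  intro s
  have hsin : 0 < sin (α s) := sin_pos_of_pos_of_lt_pi (hαrange s).1 (hαrange s).2
  refine ⟨?_, fun hμ => neg_mul_sq_div_nonpos hμ.le hsin.le⟩
  rw [← lyap_rate_closedLoop hsin.ne' (hden s).ne']
  exact hasDerivAt_lyap_comp (hρ' s) (hα' s) hsin.ne' (hden s).ne'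

/-- Along the closed-loop contact kinematics with constant object curvature
`κ̄ ≥ 0` and feedback curvature `κ = -μ₁ cos α + (ρ-μ₂) sin α`, the Lyapunov
function satisfies `dV/ds = -μ₁ cos²α / sin α ≤ 0` in the admissible region. -/
theorem lyapunov_derivative (κ' μ₁ μ₂ : ℝ) (hκ : 0 ≤ κ')
    (ρ α : ℝ → ℝ)
    (hρ' : ∀ s, HasDerivAt ρ (-Real.cos (α s)) s)
    (hα' : ∀ s, HasDerivAt α
      (-(-μ₁ * Real.cos (α s) + (ρ s - μ₂) * Real.sin (α s))
        + (κ' / (1 + ρ s * κ')) * Real.sin (α s)) s)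
    (hρpos : ∀ s, 0 < ρ s)
    (hαrange : ∀ s, 0 < α s ∧ α s < Real.pi)
    (hden : ∀ s, 0 < 1 + ρ s * κ') :
    ∀ s, HasDerivAt (fun u => Lyap κ' μ₂ (ρ u) (α u))
        (-μ₁ * (Real.cos (α s))^2 / Real.sin (α s)) s ∧
      (0 < μ₁ → -μ₁ * (Real.cos (α s))^2 / Real.sin (α s) ≤ 0) :=
  lyapunov_derivative_general κ' μ₁ μ₂ ρ α hρ' hα' hαrange hden
end
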